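/- In the twist-knot game TKNTK with n twist precrossings, King Lear (who wins if the final resolution is knotted) has a winning strategy if and only if n is even and King Lear plays second. -/

import Mathlib

/-- The sign of a crossing resolution: `true ↦ +1`, `false ↦ -1`. -/
def sgn (b : Bool) : ℤ := if b then 1 else -1

/-- Sum of the signs of the `n` twist crossings (indices `0, …, n-1`). -/
def twistSum (n : ℕ) (f : Fin (n + 2) → Bool) : ℤ :=
  ∑ i : Fin n, sgn (f (Fin.castLE (by omega) i))

/-- A full resolution of the twist-knot shadow with `n` twist precrossings and two clasp
precrossings (indices `n` and `n+1`) is knotted iff the clasp signs agree and the twist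
sum either has absolute value `≥ 2` or equals the common clasp sign. -/
def Knotted (n : ℕ) (f : Fin (n + 2) → Bool) : Prop :=
  f ⟨n, by omega⟩ = f ⟨n + 1, by omega⟩ ∧
    (2 ≤ |twistSum n f| ∨ twistSum n f = sgn (f ⟨n, by omega⟩))

/-- Partial resolutions: each of the `k` crossings is unresolved (`none`) or carries a sign. -/
abbrev PartialRes (k : ℕ) := Fin k → Option Bool

/-- `Force A fuel moverIsForcer p` : with `fuel` moves remaining from position `p`, the
player whose winning condition on full resolutions is `A` can force the game (in which the
two players alternately pick a still-unresolved crossing and assign it a sign of their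
choice) to end in a full resolution satisfying `A`.  This backward-induction predicate is
equivalent to the existence of a winning strategy in the finite game. -/
def Force {k : ℕ} (A : (Fin k → Bool) → Prop) : ℕ → Bool → PartialRes k → Prop
  | 0, _, p => ∃ f : Fin k → Bool, (∀ i, p i = some (f i)) ∧ A f
  | m + 1, true, p => ∃ i, p i = none ∧ ∃ s : Bool,
      Force A m false (Function.update p i (some s))
  | m + 1, false, p => ∀ i, p i = none → ∀ s : Bool,
      Force A m true (Function.update p i (some s))

/-- The totally unresolved shadow. -/
def emptyRes (k : ℕ) : PartialRes k := fun _ => none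

/-!
Both players win by pairing strategies. Moving second with `n` even, King Lear answers a clasp by
the same sign on the other clasp, and a twist by another twist whose sign makes the (odd) twist sum
even and nonzero; at the end the clasps agree and `|S| ≥ 2`. Ursula answers a clasp by the opposite
sign on the other clasp, and a twist by the opposite sign on another twist, which keeps `S` fixed.
Moving first with `n` odd she opens on a twist, so `S = 1` at the end; moving second, if King Lear
takes the last twist (from `S = 0`) she sets a clasp opposite to it, so `S = ±1` differs from the
clasp sign. Since the game is finite, her winning strategy excludes one for King Lear.
-/

open Finset Function

section Resolutions

variable {ι κ : Type*}

def Extends (f : ι → Bool) (p : ι → Option Bool) : Prop :=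
  ∀ i b, p i = some b → f i = b

lemma Extends.of_update [DecidableEq ι] {f : ι → Bool} {p : ι → Option Bool} {i : ι} {s : Bool}
    (hi : p i = none) (h : Extends f (update p i (some s))) : Extends f p := by
  intro j b hj
  apply h j b
  rwa [update_of_ne]
  rintro rfl
  simp_all

lemma Extends.comp {f : ι → Bool} {p : ι → Option Bool} (h : Extends f p) (e : κ → ι) :
    Extends (f ∘ e) (p ∘ e) :=
  fun i b => h (e i) b

variable [Fintype ι]

def unresolved (p : ι → Option Bool) : Finset ι := univ.filter (p · = none)

@[simp] lemma mem_unresolved {p : ι → Option Bool} {i : ι} : i ∈ unresolved p ↔ p i = none := by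
  simp [unresolved]

lemma unresolved_eq_empty {p : ι → Option Bool} : unresolved p = ∅ ↔ ∀ i, p i ≠ none := by
  simp [unresolved, filter_eq_empty_iff]

lemma card_unresolved_comp_le [Fintype κ] {e : κ → ι} (he : Injective e) (p : ι → Option Bool) :
    #(unresolved (p ∘ e)) ≤ #(unresolved p) :=
  card_le_card_of_injOn e (fun _ hi => by simpa using hi) he.injOn

lemma exists_forall_eq_some {p : ι → Option Bool} (h : unresolved p = ∅) :
    ∃ f : ι → Bool, ∀ i, p i = some (f i) := by
  refine ⟨fun i => (p i).getD false, fun i => ?_⟩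
  obtain ⟨b, hb⟩ := Option.ne_none_iff_exists'.1 (unresolved_eq_empty.1 h i)
  simp [hb]

def signSum (q : ι → Option Bool) : ℤ := ∑ i, (q i).elim 0 sgn

lemma sum_sgn_eq_signSum {f : ι → Bool} {q : ι → Option Bool} (hf : Extends f q)
    (hq : unresolved q = ∅) : ∑ i, sgn (f i) = signSum q := by
  refine sum_congr rfl fun i _ => ?_
  obtain ⟨b, hb⟩ := Option.ne_none_iff_exists'.1 (unresolved_eq_empty.1 hq i)
  simp [hb, hf i b hb]

variable [DecidableEq ι]

lemma unresolved_update_some (p : ι → Option Bool) (i : ι) (s : Bool) :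
    unresolved (update p i (some s)) = (unresolved p).erase i := by
  ext j
  by_cases h : j = i <;> simp [h]

lemma card_unresolved_update_some {p : ι → Option Bool} {i : ι} (hi : p i = none) (s : Bool) :
    #(unresolved (update p i (some s))) + 1 = #(unresolved p) := by
  rw [unresolved_update_some]
  exact card_erase_add_one (mem_unresolved.2 hi)

lemma signSum_update_some {q : ι → Option Bool} {i : ι} (hi : q i = none) (s : Bool) :
    signSum (update q i (some s)) = signSum q + sgn s := by
  unfold signSum
  rw [← add_sum_erase _ _ (mem_univ i), ← add_sum_erase _ _ (mem_univ i), update_self, hi]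
  have : ∀ j ∈ univ.erase i, (update q i (some s) j).elim 0 sgn = (q j).elim 0 sgn :=
    fun j hj => by rw [update_of_ne (ne_of_mem_erase hj)]
  rw [sum_congr rfl this]
  simp [add_comm]

end Resolutions

lemma sgn_not (b : Bool) : sgn (!b) = -sgn b := by cases b <;> simp [sgn]

lemma odd_sgn (b : Bool) : Odd (sgn b) := by cases b <;> simp [sgn]

lemma exists_even_add_sgn_ne_zero {x : ℤ} (hx : Odd x) :
    ∃ b, Even (x + sgn b) ∧ x + sgn b ≠ 0 := by
  obtain ⟨c, rfl⟩ := hx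
  refine ⟨decide (0 ≤ c), ?_⟩
  by_cases h : 0 ≤ c
  · simp only [h, decide_true, sgn, if_true]
    exact ⟨⟨c + 1, by ring⟩, by omega⟩
  · simp only [h, decide_false, sgn, Bool.false_eq_true, if_false]
    exact ⟨⟨c, by ring⟩, by omega⟩

lemma two_le_abs_of_even_of_ne_zero {x : ℤ} (hx : Even x) (h0 : x ≠ 0) : 2 ≤ |x| := by
  obtain ⟨c, rfl⟩ := hx
  rcases abs_cases (c + c) with ⟨h, h'⟩ | ⟨h, h'⟩ <;> rw [h] <;> omega

lemma card_unresolved_emptyRes (k : ℕ) : #(unresolved (emptyRes k)) = k := by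
  simp [unresolved, emptyRes]

lemma signSum_emptyRes (k : ℕ) : signSum (emptyRes k) = 0 := by
  simp [signSum, emptyRes]

namespace Force

variable {k : ℕ} {A : (Fin k → Bool) → Prop}

theorem not_of_compl : ∀ {m : ℕ} {b : Bool} {p : PartialRes k},
    Force (fun f => ¬ A f) m (!b) p → ¬ Force A m b p
  | 0, _, _, ⟨f, hf, hAf⟩, ⟨g, hg, hAg⟩ => by
    obtain rfl : f = g := funext fun i => Option.some_injective _ ((hf i).symm.trans (hg i))
    exact hAf hAg
  | _ + 1, true, _, hc, ⟨i, hi, s, h⟩ => not_of_compl (hc i hi s) h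
  | _ + 1, false, _, ⟨i, hi, s, hc⟩, h => not_of_compl hc (h i hi s)

lemma zero_of_forall_extends {b : Bool} {p : PartialRes k} (hp : unresolved p = ∅)
    (hA : ∀ f, Extends f p → A f) : Force A 0 b p := by
  obtain ⟨f, hf⟩ := exists_forall_eq_some hp
  exact ⟨f, hf, hA f fun i b hb => Option.some_injective _ ((hf i).symm.trans hb)⟩

/-- `settled` covers positions with one crossing left because, when the number of crossings left
is odd, the opponent makes the last move. -/
theorem of_reply (R : PartialRes k → Prop)
    (settled : ∀ p, R p → #(unresolved p) ≤ 1 → ∀ f, Extends f p → A f)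
    (reply : ∀ p, R p → 2 ≤ #(unresolved p) → ∀ i, p i = none → ∀ s,
      ∃ j, update p i (some s) j = none ∧ ∃ t, R (update (update p i (some s)) j (some t))) :
    ∀ {m : ℕ} {p : PartialRes k}, #(unresolved p) = m → R p → Force A m false p
  | 0, p, hm, hR => zero_of_forall_extends (card_eq_zero.1 hm) (settled p hR (by omega))
  | 1, p, hm, hR => fun i hi s => by
    have := card_unresolved_update_some hi s
    exact zero_of_forall_extends (card_eq_zero.1 (by omega))
      fun f hf => settled p hR (by omega) f (hf.of_update hi)
  | m + 2, p, hm, hR => fun i hi s => by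
    obtain ⟨j, hj, t, hR'⟩ := reply p hR (by omega) i hi s
    have h1 := card_unresolved_update_some hi s
    have h2 := card_unresolved_update_some hj t
    exact ⟨j, hj, t, of_reply R settled reply (by omega) hR'⟩

end Force

namespace TwistKnot

variable {n : ℕ}

def twist (n : ℕ) : Fin n → Fin (n + 2) := Fin.castLE (by omega)

def claspA (n : ℕ) : Fin (n + 2) := ⟨n, by omega⟩

def claspB (n : ℕ) : Fin (n + 2) := ⟨n + 1, by omega⟩

lemma twist_injective : Injective (twist n) := Fin.castLE_injective _

@[simp] lemma twist_ne_claspA (i : Fin n) : twist n i ≠ claspA n := by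
  simp [twist, claspA, Fin.ext_iff, i.is_lt.ne]

@[simp] lemma twist_ne_claspB (i : Fin n) : twist n i ≠ claspB n := by
  simp only [twist, claspB, ne_eq, Fin.ext_iff, Fin.val_castLE]; omega

@[simp] lemma claspA_ne_claspB : claspA n ≠ claspB n := by simp [claspA, claspB]

lemma eq_twist_or_eq_clasp (j : Fin (n + 2)) :
    (∃ i, j = twist n i) ∨ j = claspA n ∨ j = claspB n := by
  rcases lt_trichotomy j.val n with h | h | h
  · exact Or.inl ⟨⟨j, h⟩, rfl⟩
  · exact Or.inr (Or.inl (Fin.ext h))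
  · exact Or.inr (Or.inr (Fin.ext (by simp [claspB]; omega)))

@[simp] lemma update_twist_comp_twist (p : PartialRes (n + 2)) (i : Fin n) (v : Option Bool) :
    update p (twist n i) v ∘ twist n = update (p ∘ twist n) i v :=
  update_comp_eq_of_injective _ twist_injective _ _

@[simp] lemma update_claspA_comp_twist (p : PartialRes (n + 2)) (v : Option Bool) :
    update p (claspA n) v ∘ twist n = p ∘ twist n :=
  update_comp_eq_of_notMem_range _ _ (by simp)

@[simp] lemma update_claspB_comp_twist (p : PartialRes (n + 2)) (v : Option Bool) :
    update p (claspB n) v ∘ twist n = p ∘ twist n :=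
  update_comp_eq_of_notMem_range _ _ (by simp)

lemma twistSum_eq_signSum {f : Fin (n + 2) → Bool} {p : PartialRes (n + 2)} (hf : Extends f p)
    (hp : unresolved (p ∘ twist n) = ∅) : twistSum n f = signSum (p ∘ twist n) :=
  sum_sgn_eq_signSum (hf.comp _) hp

lemma clasps_mem_unresolved {p : PartialRes (n + 2)} (hA : p (claspA n) = none)
    (hB : p (claspB n) = none) : 2 ≤ #(unresolved p) :=
  one_lt_card.2 ⟨_, mem_unresolved.2 hA, _, mem_unresolved.2 hB, claspA_ne_claspB⟩

lemma not_knotted_of_twistSum_eq_neg {f : Fin (n + 2) → Bool}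
    (h : twistSum n f = -sgn (f (claspA n))) : ¬ Knotted n f := by
  intro hk
  have hS : 2 ≤ |twistSum n f| ∨ twistSum n f = sgn (f (claspA n)) := hk.2
  rw [h] at hS
  generalize f (claspA n) = b at hS
  cases b <;> norm_num [sgn] at hS

def LearInv (p : PartialRes (n + 2)) : Prop :=
  p (claspA n) = p (claspB n) ∧ Even (signSum (p ∘ twist n)) ∧
    Even #(unresolved (p ∘ twist n)) ∧
    (unresolved (p ∘ twist n) = ∅ → signSum (p ∘ twist n) ≠ 0)

@[simp] lemma emptyRes_comp_twist : emptyRes (n + 2) ∘ twist n = emptyRes n := rfl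

lemma learInv_emptyRes (hn : Even n) (hn₀ : n ≠ 0) : LearInv (emptyRes (n + 2)) := by
  refine ⟨rfl, ?_, ?_, fun h => ?_⟩
  · simp [signSum_emptyRes]
  · simpa [card_unresolved_emptyRes] using hn
  · have := card_unresolved_emptyRes n
    simp_all

lemma LearInv.knotted {p : PartialRes (n + 2)} (hp : LearInv p) (h1 : #(unresolved p) ≤ 1)
    {f : Fin (n + 2) → Bool} (hf : Extends f p) : Knotted n f := by
  obtain ⟨hcl, hev, hevT, hne⟩ := hp
  have hT : unresolved (p ∘ twist n) = ∅ := by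
    have := card_unresolved_comp_le twist_injective p
    rw [← card_eq_zero]
    obtain ⟨c, hc⟩ := hevT
    omega
  obtain ⟨b, hb⟩ : ∃ b, p (claspA n) = some b := Option.ne_none_iff_exists'.1 fun hA => by
    have := clasps_mem_unresolved hA (hcl ▸ hA)
    omega
  refine ⟨(hf _ _ hb).trans (hf _ _ (hcl ▸ hb)).symm, Or.inl ?_⟩
  rw [twistSum_eq_signSum hf hT]
  exact two_le_abs_of_even_of_ne_zero hev (hne hT)

lemma LearInv.update_clasps {p : PartialRes (n + 2)} (hp : LearInv p) (s : Bool) :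
    LearInv (update (update p (claspA n) (some s)) (claspB n) (some s)) := by
  refine ⟨?_, ?_⟩
  · simp
  · simpa using hp.2

lemma LearInv.reply_twist {p : PartialRes (n + 2)} (hp : LearInv p) {i : Fin n}
    (hi : p (twist n i) = none) (s : Bool) :
    ∃ j, update p (twist n i) (some s) j = none ∧
      ∃ t, LearInv (update (update p (twist n i) (some s)) j (some t)) := by
  obtain ⟨hcl, hev, hevT, -⟩ := hp
  have hiq : (p ∘ twist n) i = none := hi
  have hcard := card_erase_add_one (mem_unresolved.2 hiq)
  obtain ⟨j, hj⟩ : ((unresolved (p ∘ twist n)).erase i).Nonempty := by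
    rw [← card_pos]
    obtain ⟨c, hc⟩ := hevT
    omega
  obtain ⟨hji, hjq⟩ := mem_erase.1 hj
  have hjq' : update (p ∘ twist n) i (some s) j = none := by
    rw [update_of_ne hji]
    exact mem_unresolved.1 hjq
  obtain ⟨t, htev, htne⟩ := exists_even_add_sgn_ne_zero (hev.add_odd (odd_sgn s))
  refine ⟨twist n j, ?_, t, ?_, ?_, ?_, fun _ => ?_⟩
  · rw [update_of_ne (twist_injective.ne hji)]
    exact (mem_unresolved.1 hjq :)
  · simpa [update_of_ne (twist_ne_claspA _).symm, update_of_ne (twist_ne_claspB _).symm]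
      using hcl
  · simpa [signSum_update_some hjq', signSum_update_some hiq] using htev
  · have := card_erase_add_one hj
    simp only [update_twist_comp_twist, unresolved_update_some]
    rw [Nat.even_iff] at hevT ⊢
    omega
  · simpa [signSum_update_some hjq', signSum_update_some hiq] using htne

lemma LearInv.reply {p : PartialRes (n + 2)} (hp : LearInv p) {i : Fin (n + 2)}
    (hi : p i = none) (s : Bool) :
    ∃ j, update p i (some s) j = none ∧ ∃ t, LearInv (update (update p i (some s)) j (some t)) := by
  rcases eq_twist_or_eq_clasp i with ⟨i, rfl⟩ | rfl | rfl
  · exact hp.reply_twist hi s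
  · exact ⟨claspB n, by simpa [update_of_ne claspA_ne_claspB.symm, ← hp.1] using hi, s,
      hp.update_clasps s⟩
  · refine ⟨claspA n, by simpa [update_of_ne claspA_ne_claspB, hp.1] using hi, s, ?_⟩
    rw [update_comm claspA_ne_claspB.symm]
    exact hp.update_clasps s

lemma LearInv.force {m : ℕ} {p : PartialRes (n + 2)} (hp : LearInv p)
    (hm : #(unresolved p) = m) : Force (Knotted n) m false p :=
  Force.of_reply LearInv (fun _ hp h1 _ hf => hp.knotted h1 hf)
    (fun _ hp _ _ hi s => hp.reply hi s) hm hp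

def UrsulaInv (p : PartialRes (n + 2)) : Prop :=
  (p (claspA n) = none ∧ p (claspB n) = none ∧
    (Odd #(unresolved (p ∘ twist n)) → signSum (p ∘ twist n) = 0)) ∨
  ∀ f, Extends f p → ¬ Knotted n f

lemma ursulaInv_emptyRes : UrsulaInv (emptyRes (n + 2)) :=
  Or.inl ⟨rfl, rfl, fun _ => by simp [signSum_emptyRes]⟩

lemma UrsulaInv.not_knotted {p : PartialRes (n + 2)} (hp : UrsulaInv p)
    (h1 : #(unresolved p) ≤ 1) {f : Fin (n + 2) → Bool} (hf : Extends f p) : ¬ Knotted n f := by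
  rcases hp with ⟨hA, hB, -⟩ | hp
  · have := clasps_mem_unresolved hA hB
    omega
  · exact hp f hf

lemma not_knotted_of_extends_clasps {p : PartialRes (n + 2)} {b : Bool}
    (hA : p (claspA n) = some b) (hB : p (claspB n) = some (!b)) {f : Fin (n + 2) → Bool}
    (hf : Extends f p) : ¬ Knotted n f := fun hk => by
  have : f (claspA n) = f (claspB n) := hk.1
  rw [hf _ _ hA, hf _ _ hB] at this
  cases b <;> simp at this

lemma UrsulaInv.reply_twist {p : PartialRes (n + 2)} (hA : p (claspA n) = none)
    (hB : p (claspB n) = none)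
    (hodd : Odd #(unresolved (p ∘ twist n)) → signSum (p ∘ twist n) = 0) {i : Fin n}
    (hi : p (twist n i) = none) (s : Bool) :
    ∃ j, update p (twist n i) (some s) j = none ∧
      ∃ t, UrsulaInv (update (update p (twist n i) (some s)) j (some t)) := by
  have hiq : (p ∘ twist n) i = none := hi
  have hcard := card_erase_add_one (mem_unresolved.2 hiq)
  by_cases hrest : ((unresolved (p ∘ twist n)).erase i).Nonempty
  · obtain ⟨j, hj⟩ := hrest
    obtain ⟨hji, hjq⟩ := mem_erase.1 hj
    have hjq' : update (p ∘ twist n) i (some s) j = none := by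
      rw [update_of_ne hji]
      exact mem_unresolved.1 hjq
    refine ⟨twist n j, ?_, !s, Or.inl ⟨?_, ?_, fun h => ?_⟩⟩
    · rw [update_of_ne (twist_injective.ne hji)]
      exact (mem_unresolved.1 hjq :)
    · simpa [update_of_ne (twist_ne_claspA _).symm] using hA
    · simpa [update_of_ne (twist_ne_claspB _).symm] using hB
    · have := card_erase_add_one hj
      simp only [update_twist_comp_twist, unresolved_update_some] at h ⊢
      rw [signSum_update_some hjq', signSum_update_some hiq, sgn_not,
        hodd (by rw [Nat.odd_iff] at h ⊢; omega)]
      ring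
  · have hlast : (unresolved (p ∘ twist n)).erase i = ∅ := not_nonempty_iff_eq_empty.1 hrest
    refine ⟨claspA n, by rwa [update_of_ne (twist_ne_claspA i).symm], !s,
      Or.inr fun f hf => not_knotted_of_twistSum_eq_neg ?_⟩
    rw [twistSum_eq_signSum hf (by simpa [unresolved_update_some] using hlast),
      hf (claspA n) (!s) (by simp)]
    simp only [update_claspA_comp_twist, update_twist_comp_twist]
    rw [signSum_update_some hiq, hodd (by simp [← hcard, hlast]), sgn_not]
    simp

lemma UrsulaInv.reply {p : PartialRes (n + 2)} (hp : UrsulaInv p) (h2 : 2 ≤ #(unresolved p))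
    {i : Fin (n + 2)} (hi : p i = none) (s : Bool) :
    ∃ j, update p i (some s) j = none ∧
      ∃ t, UrsulaInv (update (update p i (some s)) j (some t)) := by
  rcases hp with ⟨hA, hB, hodd⟩ | hp
  · rcases eq_twist_or_eq_clasp i with ⟨i, rfl⟩ | rfl | rfl
    · exact UrsulaInv.reply_twist hA hB hodd hi s
    · refine ⟨claspB n, by simpa [update_of_ne claspA_ne_claspB.symm] using hB, !s,
        Or.inr fun f => not_knotted_of_extends_clasps (b := s) ?_ (by simp)⟩
      simp
    · refine ⟨claspA n, by simpa [update_of_ne claspA_ne_claspB] using hA, !s,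
        Or.inr fun f => not_knotted_of_extends_clasps (b := !s) (by simp) ?_⟩
      simp [update_of_ne claspA_ne_claspB.symm]
  · obtain ⟨j, hj⟩ : (unresolved (update p i (some s))).Nonempty := by
      have := card_unresolved_update_some hi s
      rw [← card_pos]
      omega
    exact ⟨j, mem_unresolved.1 hj, true,
      Or.inr fun f hf => hp f ((hf.of_update (mem_unresolved.1 hj)).of_update hi)⟩

lemma UrsulaInv.force {m : ℕ} {p : PartialRes (n + 2)} (hp : UrsulaInv p)
    (hm : #(unresolved p) = m) : Force (fun f => ¬ Knotted n f) m false p :=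
  Force.of_reply UrsulaInv (fun _ hp h1 _ hf => hp.not_knotted h1 hf)
    (fun _ hp h2 _ hi s => hp.reply h2 hi s) hm hp

theorem lear_wins_second (hn : Even n) (hn₀ : n ≠ 0) :
    Force (Knotted n) (n + 2) false (emptyRes (n + 2)) :=
  (learInv_emptyRes hn hn₀).force (card_unresolved_emptyRes _)

theorem ursula_wins_second : Force (fun f => ¬ Knotted n f) (n + 2) false (emptyRes (n + 2)) :=
  ursulaInv_emptyRes.force (card_unresolved_emptyRes _)

theorem ursula_wins_first (hn : Odd n) :
    Force (fun f => ¬ Knotted n f) (n + 2) true (emptyRes (n + 2)) := by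
  have hfirst := card_unresolved_update_some (p := emptyRes (n + 2)) (i := twist n ⟨0, hn.pos⟩)
    rfl true
  refine ⟨twist n ⟨0, hn.pos⟩, rfl, true, UrsulaInv.force
    (Or.inl ⟨update_of_ne (twist_ne_claspA _).symm _ _, update_of_ne (twist_ne_claspB _).symm _ _,
      fun h => ?_⟩) ?_⟩
  · have := card_unresolved_update_some (p := emptyRes n) (i := ⟨0, hn.pos⟩) rfl true
    simp only [update_twist_comp_twist, emptyRes_comp_twist, card_unresolved_emptyRes] at h this
    rw [Nat.odd_iff] at h hn
    omega
  · rw [card_unresolved_emptyRes] at hfirst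
    omega

end TwistKnot

open TwistKnot

/-- TKNTK on a twist-knot shadow with `n` twist precrossings: King Lear (goal: knotted)
has a winning strategy iff `n` is even and King Lear plays second.  Here `learFirst = true`
means King Lear makes the first move. -/
theorem tkntk_lear_wins_iff (n : ℕ) (hn1 : 1 ≤ n) (learFirst : Bool) :
    Force (Knotted n) (n + 2) learFirst (emptyRes (n + 2)) ↔
      Even n ∧ learFirst = false := by
  constructor
  · intro hF
    cases learFirst with
    | true => exact absurd hF (Force.not_of_compl ursula_wins_second)
    | false =>
      exact ⟨Nat.not_odd_iff_even.1 fun hn => Force.not_of_compl (ursula_wins_first hn) hF, rfl⟩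
  · rintro ⟨hn, rfl⟩
    exact lear_wins_second hn (by omega)
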